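/- A state ψ is stationary under the SKW operator U' (i.e., U'ψ = ψ) if and only if for every dart (a,b) of G, writing σ₁ = avg_ψ(a), φ₁ = ψ(a,b) − avg_ψ(a), σ₂ = avg_ψ(b), φ₂ = ψ(b,a) − avg_ψ(b), the following hold: (P1) if a ∉ M and b ∈ M, then σ₁ = 0 and φ₁ = −(σ₂ + φ₂); (P2) if a ∉ M and b ∉ M, then σ₁ = σ₂ and φ₁ = −φ₂; (P3) if a ∈ M and b ∈ M, then ψ(a,b) = −ψ(b,a). -/
import Mathlib


open Finset

variable {V : Type*} [Fintype V] [DecidableEq V]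

/-- The average of the amplitudes of the state `ψ` at vertex `a`:
`avg_ψ(a) = (1/deg a) * ∑_{b ~ a} ψ(a,b)`. -/
noncomputable def avgQ (G : SimpleGraph V) [DecidableRel G.Adj] (ψ : V → V → ℂ) (a : V) : ℂ :=
  (G.degree a : ℂ)⁻¹ * ∑ b ∈ G.neighborFinset a, ψ a b

/-- The SKW coin `C'`: applies `-I` at marked vertices and the Grover coin elsewhere. -/
noncomputable def CopSKW (G : SimpleGraph V) [DecidableRel G.Adj] (M : Finset V)
    (ψ : V → V → ℂ) : V → V → ℂ :=
  fun a b => if a ∈ M then -ψ a b else 2 * avgQ G ψ a - ψ a b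

/-- The flip-flop shift `S`. -/
def Sop (ψ : V → V → ℂ) : V → V → ℂ :=
  fun a b => ψ b a

/-- The SKW search operator `U' = S ∘ C'`. -/
noncomputable def UopSKW (G : SimpleGraph V) [DecidableRel G.Adj] (M : Finset V)
    (ψ : V → V → ℂ) : V → V → ℂ :=
  Sop (CopSKW G M ψ)

/-- A state is stationary under the SKW operator `U'` if `U'ψ = ψ` on every dart of `G`. -/
def StationarySKW (G : SimpleGraph V) [DecidableRel G.Adj] (M : Finset V)
    (ψ : V → V → ℂ) : Prop :=
  ∀ a b, G.Adj a b → UopSKW G M ψ a b = ψ a b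

/-- Characterization of stationary states of the SKW search operator `U' = SC'` in terms
of the uniform and flip components of the amplitudes on each dart. -/
theorem skw_stationary_iff (G : SimpleGraph V) [DecidableRel G.Adj]
    (M : Finset V) (hdeg : ∀ v, 0 < G.degree v) (ψ : V → V → ℂ) :
    StationarySKW G M ψ ↔
      ∀ a b, G.Adj a b →
        ((a ∉ M → b ∈ M →
            avgQ G ψ a = 0 ∧
            ψ a b - avgQ G ψ a = -(avgQ G ψ b + (ψ b a - avgQ G ψ b))) ∧
         (a ∉ M → b ∉ M →
            avgQ G ψ a = avgQ G ψ b ∧ ψ a b - avgQ G ψ a = -(ψ b a - avgQ G ψ b)) ∧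
         (a ∈ M → b ∈ M → ψ a b = -ψ b a)) := by
  constructor
  · intro h a b hab
    have h1 := h a b hab
    have h2 := h b a hab.symm
    simp only [UopSKW, Sop, CopSKW] at h1 h2
    refine ⟨fun ha hb => ?_, fun ha hb => ?_, fun ha hb => ?_⟩
    · rw [if_pos hb] at h1
      rw [if_neg ha] at h2
      exact ⟨by linear_combination (h2 - h1) / 2, by linear_combination (-h1 - h2) / 2⟩
    · rw [if_neg hb] at h1
      rw [if_neg ha] at h2
      exact ⟨by linear_combination (h2 - h1) / 2, by linear_combination (-h1 - h2) / 2⟩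
    · rw [if_pos hb] at h1
      linear_combination -h1
  · intro h a b hab
    obtain ⟨P1, P2, P3⟩ := h a b hab
    obtain ⟨Q1, Q2, Q3⟩ := h b a hab.symm
    simp only [UopSKW, Sop, CopSKW]
    by_cases hb : b ∈ M
    · rw [if_pos hb]
      by_cases ha : a ∈ M
      · linear_combination -(P3 ha hb)
      · obtain ⟨e1, e2⟩ := P1 ha hb
        linear_combination -e2 - e1
    · rw [if_neg hb]
      by_cases ha : a ∈ M
      · obtain ⟨e1, e2⟩ := Q1 hb ha
        linear_combination -e2 + e1
      · obtain ⟨e1, e2⟩ := P2 ha hb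
        linear_combination -e1 - e2
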